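/- Let W : [-1,1] → [0,∞) satisfy (H1). Then there exists a constant C > 0 (depending only on W) such that for all parameters b, σ, κ, Λ > 0 satisfying Λ² ≥ C·max{σb, bκ, (bσκ)^{1/2}, b^{1/2}κ}, there exists an admissible pair (u,h) ∈ A with F(u,h) ≤ −(1/20)·Λ²/κ. -/

import Mathlib

open MeasureTheory Set Filter

noncomputable section

/-- The energy functional
`F(u,h) = ∫₀¹ ( W(u) + (b/2)|u'|² + (σ/2)|h'|² + (κ/2)|h''|² + Λ·u·h'' ) dx`,
expressed in terms of the (weak) derivatives `u'`, `h'`, `h''`. -/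
def energyF (W : ℝ → ℝ) (b σ κ Λ : ℝ) (u u' h' h'' : ℝ → ℝ) : ℝ :=
  ∫ x in Ioo (0:ℝ) 1,
    (W (u x) + b / 2 * u' x ^ 2 + σ / 2 * h' x ^ 2 + κ / 2 * h'' x ^ 2 + Λ * u x * h'' x)

/-- The admissible class `A`: `u` is (the restriction of) a `1`-periodic `W^{1,2}_loc`
function with values in `[-1,1]` and mean zero on `(0,1)`, with weak derivative `u'`;
`h` is a `1`-periodic `W^{2,2}_loc` function with mean zero, with weak derivatives
`h'`, `h''`.  One-dimensional Sobolev regularity is encoded through absolute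
continuity (the fundamental theorem of calculus) together with square-integrability
of the highest derivative on the periodicity cell. -/
structure IsAdmissible (u u' h h' h'' : ℝ → ℝ) : Prop where
  u_per : Function.Periodic u 1
  u'_per : Function.Periodic u' 1
  u_ftc : ∀ x : ℝ, u x = u 0 + ∫ t in (0:ℝ)..x, u' t
  u_mem : ∀ x : ℝ, u x ∈ Icc (-1:ℝ) 1
  u'_l2 : MemLp u' 2 (volume.restrict (Ioo (0:ℝ) 1))
  u_mean : (∫ x in Ioo (0:ℝ) 1, u x) = 0
  h_per : Function.Periodic h 1
  h'_per : Function.Periodic h' 1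
  h''_per : Function.Periodic h'' 1
  h_ftc : ∀ x : ℝ, h x = h 0 + ∫ t in (0:ℝ)..x, h' t
  h'_ftc : ∀ x : ℝ, h' x = h' 0 + ∫ t in (0:ℝ)..x, h'' t
  h''_l2 : MemLp h'' 2 (volume.restrict (Ioo (0:ℝ) 1))
  h_mean : (∫ x in Ioo (0:ℝ) 1, h x) = 0

/-- `max{bσ, bκ, (bσκ)^{1/2}, b^{1/2}κ}`. -/
def maxParam (b σ κ : ℝ) : ℝ :=
  max (max (b * σ) (b * κ)) (max (Real.sqrt (b * σ * κ)) (Real.sqrt b * κ))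

/-!
Take `u(x) = U(N x)`, where `U` is a `1`-periodic trapezoidal wave equal to `±1` outside
transition layers of total length `4a` per period, with slope `1/a` inside them, and let
`h'' = -(Λ/κ) u` (it has periodic primitives because `u` has mean zero). This choice minimises
the integrand in `h''` pointwise: `κ/2 h''² + Λ u h'' = -Λ²/(2κ) u²`. Since `W(u)` and `u'`
vanish wherever `|u| = 1`, and `h'` is of size `Λ/(κN)` because `u` oscillates with period `1/N`,
`F(u,h) ≤ 4aM + 2bN²/a + 2σΛ²/(κ²N²) - Λ²/(2κ)·(1 - 4a)` with `M = max W`. Taking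
`N² ≈ 40σ/κ` and `a = 20bN²κ/Λ²` makes all error terms small multiples of `Λ²/κ` once `Λ²`
dominates `C·max{bσ, bκ, (bσκ)^{1/2}, b^{1/2}κ}`.
-/

open Function

theorem Function.Periodic.deriv {𝕜 F : Type*} [NontriviallyNormedField 𝕜] [NormedAddCommGroup F]
    [NormedSpace 𝕜 F] {f : 𝕜 → F} {c : 𝕜} (hf : Periodic f c) : Periodic (deriv f) c := fun x => by
  rw [← deriv_comp_add_const]
  congr 1
  exact funext hf

theorem Function.Periodic.comp_natCast_mul {α : Type*} {g : ℝ → α} (hg : Periodic g 1) (N : ℕ) :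
    Periodic (fun x => g (N * x)) 1 := fun x => by
  simpa [mul_add] using (hg.nat_mul N) (N * x)

theorem Function.Periodic.intervalIntegral_comp_natCast_mul {E : Type*} [NormedAddCommGroup E]
    [NormedSpace ℝ E] {g : ℝ → E} (hg : Periodic g 1)
    (hint : ∀ p q, IntervalIntegrable g volume p q) {N : ℕ} (hN : N ≠ 0) :
    ∫ x in (0:ℝ)..1, g (N * x) = ∫ x in (0:ℝ)..1, g x := by
  have h := hg.intervalIntegral_add_zsmul_eq N 0 hint
  simp only [zero_add, natCast_zsmul, ← Nat.cast_smul_eq_nsmul ℝ, smul_eq_mul, mul_one] at h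
  rw [intervalIntegral.integral_comp_mul_left g (Nat.cast_ne_zero.2 hN), mul_zero, mul_one, h,
    smul_smul, inv_mul_cancel₀ (Nat.cast_ne_zero.2 hN), one_smul]

theorem Function.Periodic.abs_intervalIntegral_le {g : ℝ → ℝ} {B : ℝ} (hg : Periodic g 1)
    (hint : ∀ p q, IntervalIntegrable g volume p q) (hmean : ∫ x in (0:ℝ)..1, g x = 0)
    (hB : ∀ x, |g x| ≤ B) (y : ℝ) : |∫ x in (0:ℝ)..y, g x| ≤ B := by
  have hperiods : ∫ x in Int.fract y..y, g x = 0 := by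
    have h := hg.intervalIntegral_add_zsmul_eq ⌊y⌋ (Int.fract y) hint
    rwa [zsmul_one, Int.fract_add_floor, hg.intervalIntegral_add_eq _ 0, zero_add, hmean,
      smul_zero] at h
  rw [← intervalIntegral.integral_add_adjacent_intervals (hint 0 (Int.fract y)) (hint _ y),
    hperiods, add_zero]
  calc |∫ x in (0:ℝ)..Int.fract y, g x| ≤ B * |Int.fract y - 0| :=
        intervalIntegral.norm_integral_le_of_norm_le_const (f := g) fun x _ => hB x
    _ ≤ B * 1 := by
        gcongr
        · exact (abs_nonneg _).trans (hB 0)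
        · rw [sub_zero, abs_of_nonneg (Int.fract_nonneg y)]
          exact (Int.fract_lt_one y).le
    _ = B := mul_one B

lemma integral_Ioo_zero_one_eq_intervalIntegral (f : ℝ → ℝ) :
    ∫ x in Ioo (0:ℝ) 1, f x = ∫ x in (0:ℝ)..1, f x := by
  rw [intervalIntegral.integral_of_le zero_le_one, integral_Ioc_eq_integral_Ioo]

def periodicPrimitive (g : ℝ → ℝ) (x : ℝ) : ℝ :=
  (∫ t in (0:ℝ)..x, g t) - ∫ y in (0:ℝ)..1, ∫ t in (0:ℝ)..y, g t

section PeriodicPrimitive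

variable {g : ℝ → ℝ}

lemma periodicPrimitive_eq_add (g : ℝ → ℝ) (x : ℝ) :
    periodicPrimitive g x = periodicPrimitive g 0 + ∫ t in (0:ℝ)..x, g t := by
  simp only [periodicPrimitive, intervalIntegral.integral_same]
  ring

lemma Continuous.periodicPrimitive (hg : Continuous g) : Continuous (periodicPrimitive g) :=
  (intervalIntegral.continuous_primitive (fun p q => hg.intervalIntegrable p q) 0).sub
    continuous_const

lemma Function.Periodic.periodicPrimitive (hg : Periodic g 1)
    (hint : ∀ p q, IntervalIntegrable g volume p q) (hmean : ∫ x in (0:ℝ)..1, g x = 0) :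
    Periodic (periodicPrimitive g) 1 := fun x => by
  simp only [_root_.periodicPrimitive]
  rw [hg.intervalIntegral_add_eq_add 0 x hint, zero_add, hmean, add_zero]

lemma intervalIntegral_periodicPrimitive (hg : Continuous g) :
    ∫ x in (0:ℝ)..1, periodicPrimitive g x = 0 := by
  have hint : IntervalIntegrable (fun x => ∫ t in (0:ℝ)..x, g t) volume 0 1 :=
    (intervalIntegral.continuous_primitive (fun p q => hg.intervalIntegrable p q) 0
      ).intervalIntegrable 0 1
  simp only [periodicPrimitive]
  rw [intervalIntegral.integral_sub hint intervalIntegrable_const]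
  simp

lemma abs_periodicPrimitive_le {B : ℝ} (hB : ∀ y, |∫ t in (0:ℝ)..y, g t| ≤ B) (x : ℝ) :
    |periodicPrimitive g x| ≤ 2 * B := by
  have hmean : |∫ y in (0:ℝ)..1, ∫ t in (0:ℝ)..y, g t| ≤ B := by
    simpa using intervalIntegral.norm_integral_le_of_norm_le_const
      (f := fun y => ∫ t in (0:ℝ)..y, g t) (a := 0) (b := 1) fun y _ => hB y
  rw [periodicPrimitive]
  linarith [abs_sub (∫ t in (0:ℝ)..x, g t) (∫ y in (0:ℝ)..1, ∫ t in (0:ℝ)..y, g t), hB x]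

end PeriodicPrimitive

theorem isAdmissible_of_lipschitzWith {u : ℝ → ℝ} {K : NNReal} (hu : LipschitzWith K u)
    (hper : Periodic u 1) (hmem : ∀ x, u x ∈ Icc (-1:ℝ) 1) (hmean : ∫ x in (0:ℝ)..1, u x = 0)
    (c : ℝ) :
    IsAdmissible u (deriv u) (periodicPrimitive (periodicPrimitive fun x => c * u x))
      (periodicPrimitive fun x => c * u x) (fun x => c * u x) := by
  have hcu : Continuous fun x => c * u x := continuous_const.mul hu.continuous
  have hcu_int : ∀ p q, IntervalIntegrable (fun x => c * u x) volume p q :=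
    fun p q => hcu.intervalIntegrable p q
  have hcu_per : Periodic (fun x => c * u x) 1 := fun x => by simp only [hper x]
  have hcu_mean : ∫ x in (0:ℝ)..1, c * u x = 0 := by
    rw [intervalIntegral.integral_const_mul, hmean, mul_zero]
  have hh' : Continuous (periodicPrimitive fun x => c * u x) := hcu.periodicPrimitive
  refine
    { u_per := hper
      u'_per := hper.deriv
      u_ftc := fun x => ?_
      u_mem := hmem
      u'_l2 := MemLp.of_bound (measurable_deriv u).aestronglyMeasurable K
        (ae_of_all _ fun x => norm_deriv_le_of_lipschitz hu)
      u_mean := by rw [integral_Ioo_zero_one_eq_intervalIntegral, hmean]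
      h_per := (hcu_per.periodicPrimitive hcu_int hcu_mean).periodicPrimitive
        (fun p q => hh'.intervalIntegrable p q) (intervalIntegral_periodicPrimitive hcu)
      h'_per := hcu_per.periodicPrimitive hcu_int hcu_mean
      h''_per := hcu_per
      h_ftc := periodicPrimitive_eq_add _
      h'_ftc := periodicPrimitive_eq_add _
      h''_l2 := MemLp.of_bound hcu.aestronglyMeasurable |c| (ae_of_all _ fun x => ?_)
      h_mean := by
        rw [integral_Ioo_zero_one_eq_intervalIntegral, intervalIntegral_periodicPrimitive hh'] }
  · rw [(hu.lipschitzOnWith (s := uIcc 0 x)).absolutelyContinuousOnInterval.integral_deriv_eq_sub]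
    ring
  · rw [Real.norm_eq_abs, abs_mul]
    exact mul_le_of_le_one_right (abs_nonneg c) (abs_le.2 (hmem x))

theorem setIntegral_le_mul_measureReal_inter {α : Type*} [MeasurableSpace α] {μ : Measure α}
    {f : α → ℝ} {s S : Set α} {K : ℝ} (hs : MeasurableSet s) (hS : MeasurableSet S)
    (hμs : μ s < ⊤) (hf : IntegrableOn f s μ) (hK : ∀ x ∈ s ∩ S, f x ≤ K)
    (hzero : ∀ x ∈ s, x ∉ S → f x ≤ 0) :
    ∫ x in s, f x ∂μ ≤ K * μ.real (s ∩ S) := by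
  have hind : IntegrableOn (S.indicator fun _ => K) s μ :=
    ((integrableOn_const_iff (C := K)).2 (Or.inr hμs)).indicator hS
  calc ∫ x in s, f x ∂μ ≤ ∫ x in s, S.indicator (fun _ => K) x ∂μ :=
        setIntegral_mono_on hf hind hs fun x hx => by
          by_cases hxS : x ∈ S
          · rw [indicator_of_mem hxS]
            exact hK x ⟨hx, hxS⟩
          · rw [indicator_of_notMem hxS]
            exact hzero x hx hxS
    _ = K * μ.real (s ∩ S) := by
        rw [setIntegral_indicator hS, setIntegral_const, smul_eq_mul, mul_comm]

theorem measureReal_Ioo_inter_preimage_natCast_mul {S : Set ℝ} (hS : MeasurableSet S)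
    (hper : ∀ x, x + 1 ∈ S ↔ x ∈ S) {N : ℕ} (hN : N ≠ 0) :
    volume.real (Ioo (0:ℝ) 1 ∩ (fun x => (N:ℝ) * x) ⁻¹' S) = volume.real (Ioo (0:ℝ) 1 ∩ S) := by
  have hT : MeasurableSet ((fun x => (N:ℝ) * x) ⁻¹' S) := measurable_const_mul _ hS
  have hind_per : Periodic (S.indicator (1 : ℝ → ℝ)) 1 := fun x => by
    by_cases hx : x ∈ S
    · rw [indicator_of_mem hx, indicator_of_mem ((hper x).2 hx), Pi.one_apply, Pi.one_apply]
    · rw [indicator_of_notMem hx, indicator_of_notMem (mt (hper x).1 hx)]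
  have hind_int : ∀ p q, IntervalIntegrable (S.indicator (1 : ℝ → ℝ)) volume p q := fun p q =>
    intervalIntegrable_iff.2 <|
      ((continuous_const.integrableOn_uIcc (a := p) (b := q)).mono_set
        uIoc_subset_uIcc).indicator hS
  have hvol : ∀ {T : Set ℝ}, MeasurableSet T →
      volume.real (Ioo (0:ℝ) 1 ∩ T) = ∫ x in (0:ℝ)..1, T.indicator 1 x := fun hT => by
    rw [← integral_Ioo_zero_one_eq_intervalIntegral, setIntegral_indicator hT]
    simp
  rw [hvol hT, hvol hS, ← hind_per.intervalIntegral_comp_natCast_mul hind_int hN]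
  rfl

lemma setIntegral_Ioo_sq_le {f : ℝ → ℝ} {B : ℝ} (hB : ∀ x, |f x| ≤ B) :
    ∫ x in Ioo (0:ℝ) 1, f x ^ 2 ≤ B ^ 2 := by
  have h := norm_setIntegral_le_of_norm_le_const (μ := volume) (s := Ioo (0:ℝ) 1)
    (f := fun x => f x ^ 2) measure_Ioo_lt_top fun x _ => by
      rw [Real.norm_eq_abs, abs_pow]
      exact pow_le_pow_left₀ (abs_nonneg _) (hB x) 2
  rw [Real.volume_real_Ioo_of_le zero_le_one, sub_zero, mul_one, Real.norm_eq_abs] at h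
  exact (le_abs_self _).trans h

section Transition

variable {u : ℝ → ℝ} {δ : ℝ}

lemma eq_neg_one_or_eq_one_of_not_abs_lt {y : ℝ} (hy : y ∈ Icc (-1:ℝ) 1) (h : ¬|y| < 1) :
    y = -1 ∨ y = 1 := by
  rw [abs_lt, not_and_or, not_lt, not_lt] at h
  rcases h with h | h
  · exact Or.inl (le_antisymm h hy.1)
  · exact Or.inr (le_antisymm hy.2 h)

lemma setIntegral_le_mul_of_abs_lt_one {f : ℝ → ℝ} {K : ℝ} (hu : Continuous u)
    (hK₀ : 0 ≤ K) (hδ : volume.real (Ioo (0:ℝ) 1 ∩ {x | |u x| < 1}) ≤ δ)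
    (hf : IntegrableOn f (Ioo (0:ℝ) 1)) (hK : ∀ x, f x ≤ K)
    (hzero : ∀ x, ¬|u x| < 1 → f x ≤ 0) :
    ∫ x in Ioo (0:ℝ) 1, f x ≤ K * δ :=
  (setIntegral_le_mul_measureReal_inter measurableSet_Ioo
    (isOpen_lt (continuous_abs.comp hu) continuous_const).measurableSet measure_Ioo_lt_top hf
    (fun x _ => hK x) (fun x _ => hzero x)).trans (mul_le_mul_of_nonneg_left hδ hK₀)

lemma setIntegral_comp_le_mul {W : ℝ → ℝ} {M : ℝ} (hu : Continuous u)
    (hmem : ∀ x, u x ∈ Icc (-1:ℝ) 1) (hδ : volume.real (Ioo (0:ℝ) 1 ∩ {x | |u x| < 1}) ≤ δ)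
    (hW : ContinuousOn W (Icc (-1:ℝ) 1)) (hWM : ∀ y ∈ Icc (-1:ℝ) 1, W y ≤ M)
    (hWneg : W (-1) = 0) (hWpos : W 1 = 0) :
    ∫ x in Ioo (0:ℝ) 1, W (u x) ≤ M * δ := by
  have hWu : Continuous fun x => W (u x) := hW.comp_continuous hu hmem
  refine setIntegral_le_mul_of_abs_lt_one hu (hWpos ▸ hWM 1 (by norm_num)) hδ
    ((hWu.integrableOn_Icc).mono_set Ioo_subset_Icc_self) (fun x => hWM _ (hmem x)) fun x hx => ?_
  rcases eq_neg_one_or_eq_one_of_not_abs_lt (hmem x) hx with h | h <;> simp [h, hWneg, hWpos]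

lemma deriv_sq_le_of_lipschitzWith {L : NNReal} (hu : LipschitzWith L u) (x : ℝ) :
    deriv u x ^ 2 ≤ (L:ℝ) ^ 2 := by
  rw [← sq_abs]
  exact pow_le_pow_left₀ (abs_nonneg _) (norm_deriv_le_of_lipschitz hu) 2

lemma LipschitzWith.integrableOn_deriv_sq {L : NNReal} (hu : LipschitzWith L u) {s : Set ℝ}
    (hs : volume s ≠ ⊤) : IntegrableOn (fun x => deriv u x ^ 2) s :=
  Measure.integrableOn_of_bounded hs ((measurable_deriv u).pow_const 2).aestronglyMeasurable
    (ae_of_all _ fun x => by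
      rw [Real.norm_eq_abs, abs_of_nonneg (sq_nonneg _)]
      exact deriv_sq_le_of_lipschitzWith hu x)

lemma setIntegral_deriv_sq_le {L : NNReal} (hu : LipschitzWith L u)
    (hmem : ∀ x, u x ∈ Icc (-1:ℝ) 1) (hδ : volume.real (Ioo (0:ℝ) 1 ∩ {x | |u x| < 1}) ≤ δ) :
    ∫ x in Ioo (0:ℝ) 1, deriv u x ^ 2 ≤ (L:ℝ) ^ 2 * δ := by
  refine setIntegral_le_mul_of_abs_lt_one hu.continuous (sq_nonneg _) hδ
    (hu.integrableOn_deriv_sq measure_Ioo_lt_top.ne)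
    (deriv_sq_le_of_lipschitzWith hu) fun x hx => ?_
  -- `u` attains its maximum or minimum at `x`, so `deriv u x = 0`, differentiable or not.
  have hextr : deriv u x = 0 := by
    rcases eq_neg_one_or_eq_one_of_not_abs_lt (hmem x) hx with h | h
    · exact IsLocalMin.deriv_eq_zero (Filter.Eventually.of_forall fun y => h ▸ (hmem y).1)
    · exact IsLocalMax.deriv_eq_zero (Filter.Eventually.of_forall fun y => h ▸ (hmem y).2)
  rw [hextr]
  norm_num

lemma one_sub_le_setIntegral_sq (hu : Continuous u)
    (hmem : ∀ x, u x ∈ Icc (-1:ℝ) 1) (hδ : volume.real (Ioo (0:ℝ) 1 ∩ {x | |u x| < 1}) ≤ δ) :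
    1 - δ ≤ ∫ x in Ioo (0:ℝ) 1, u x ^ 2 := by
  have hcont : Continuous fun x => u x ^ 2 := hu.pow 2
  have h := setIntegral_le_mul_of_abs_lt_one (f := fun x => 1 - u x ^ 2) hu zero_le_one hδ
    ((continuous_const.sub hcont).integrableOn_Icc.mono_set Ioo_subset_Icc_self)
    (fun x => by nlinarith [sq_nonneg (u x)]) fun x hx => by
      rcases eq_neg_one_or_eq_one_of_not_abs_lt (hmem x) hx with h | h <;> simp [h]
  rw [integral_sub ((integrableOn_const_iff (C := (1:ℝ))).2 (Or.inr measure_Ioo_lt_top))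
    (hcont.integrableOn_Icc.mono_set Ioo_subset_Icc_self), setIntegral_const,
    Real.volume_real_Ioo_of_le zero_le_one, sub_zero, one_smul, one_mul] at h
  linarith

end Transition

lemma energyF_neg_div_mul_eq {W u u' h' : ℝ → ℝ} {b σ κ Λ : ℝ} (hκ : κ ≠ 0)
    (hWu : IntegrableOn (fun x => W (u x)) (Ioo (0:ℝ) 1))
    (hu' : IntegrableOn (fun x => u' x ^ 2) (Ioo (0:ℝ) 1))
    (hh' : IntegrableOn (fun x => h' x ^ 2) (Ioo (0:ℝ) 1))
    (hu : IntegrableOn (fun x => u x ^ 2) (Ioo (0:ℝ) 1)) :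
    energyF W b σ κ Λ u u' h' (fun x => -(Λ / κ) * u x) =
      (∫ x in Ioo (0:ℝ) 1, W (u x)) + b / 2 * (∫ x in Ioo (0:ℝ) 1, u' x ^ 2)
        + σ / 2 * (∫ x in Ioo (0:ℝ) 1, h' x ^ 2)
        - Λ ^ 2 / (2 * κ) * ∫ x in Ioo (0:ℝ) 1, u x ^ 2 := by
  have hpt : ∀ x, W (u x) + b / 2 * u' x ^ 2 + σ / 2 * h' x ^ 2 + κ / 2 * (-(Λ / κ) * u x) ^ 2
      + Λ * u x * (-(Λ / κ) * u x) =
      W (u x) + b / 2 * u' x ^ 2 + σ / 2 * h' x ^ 2 - Λ ^ 2 / (2 * κ) * u x ^ 2 := fun x => by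
    field_simp
    ring
  have h₁ : IntegrableOn (fun x => W (u x) + b / 2 * u' x ^ 2) (Ioo (0:ℝ) 1) :=
    hWu.add (hu'.const_mul _)
  have h₂ : IntegrableOn (fun x => W (u x) + b / 2 * u' x ^ 2 + σ / 2 * h' x ^ 2) (Ioo (0:ℝ) 1) :=
    h₁.add (hh'.const_mul _)
  rw [energyF, integral_congr_ae (ae_of_all _ hpt), integral_sub h₂ (hu.const_mul _),
    integral_add h₁ (hh'.const_mul _), integral_add hWu (hu'.const_mul _), integral_const_mul,
    integral_const_mul, integral_const_mul]

def unitClamp (x : ℝ) : ℝ := max (-1) (min 1 x)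

lemma abs_unitClamp_le (x : ℝ) : |unitClamp x| ≤ 1 :=
  abs_le.2 ⟨le_max_left _ _, max_le (by norm_num) (min_le_left _ _)⟩

lemma unitClamp_neg (x : ℝ) : unitClamp (-x) = -unitClamp x := by
  simp only [unitClamp, max_def, min_def]
  split_ifs <;> linarith

lemma abs_unitClamp_sub_le (x y : ℝ) : |unitClamp x - unitClamp y| ≤ |x - y| := by
  have := le_abs_self (x - y)
  have := neg_abs_le (x - y)
  simp only [unitClamp, max_def, min_def]
  rw [abs_le]
  split_ifs <;> constructor <;> linarith

lemma abs_lt_one_of_abs_unitClamp_lt_one {x : ℝ} (h : |unitClamp x| < 1) : |x| < 1 := by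
  simp only [unitClamp, max_def, min_def] at h
  rw [abs_lt] at *
  split_ifs at h <;> constructor <;> linarith

lemma norm_coe_unitAddCircle_of_mem_Icc {t : ℝ} (ht : t ∈ Icc (0:ℝ) 1) :
    ‖(t : UnitAddCircle)‖ = min t (1 - t) := by
  have hnorm : ∀ {s : ℝ}, |s| ≤ 1 / 2 → ‖(s : UnitAddCircle)‖ = |s| := fun hs =>
    (AddCircle.norm_coe_eq_abs_iff 1 one_ne_zero).2 (by simpa using hs)
  rcases le_total t (1/2) with h | h
  · rw [hnorm (abs_le.2 ⟨by linarith [ht.1], h⟩), abs_of_nonneg ht.1, min_eq_left (by linarith)]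
  · have hshift : (t : UnitAddCircle) = ((t - 1 : ℝ) : UnitAddCircle) := by
      rw [← AddCircle.coe_add_period 1 (t - 1), sub_add_cancel]
    rw [hshift, hnorm (abs_le.2 ⟨by linarith, by linarith [ht.2]⟩),
      abs_of_nonpos (by linarith [ht.2]), min_eq_right (by linarith)]
    ring

/-- `‖(t : UnitAddCircle)‖` is the distance from `t` to `ℤ`, so the wave is `1` near `ℤ`, `-1` near
`ℤ + 1/2`, and linear of slope `±1/a` on the layers where that distance is within `a` of `1/4`. -/
def trapezoidWave (a t : ℝ) : ℝ := unitClamp ((1/4 - ‖(t : UnitAddCircle)‖) / a)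

section TrapezoidWave

variable {a : ℝ}

lemma trapezoidWave_periodic (a : ℝ) : Periodic (trapezoidWave a) 1 := fun t => by
  rw [trapezoidWave, AddCircle.coe_add_period, trapezoidWave]

lemma abs_trapezoidWave_le (a t : ℝ) : |trapezoidWave a t| ≤ 1 := abs_unitClamp_le _

lemma abs_trapezoidWave_sub_le (ha : 0 < a) (s t : ℝ) :
    |trapezoidWave a s - trapezoidWave a t| ≤ a⁻¹ * |s - t| := by
  have hnorm : |‖(t : UnitAddCircle)‖ - ‖(s : UnitAddCircle)‖| ≤ |s - t| := by
    refine (abs_norm_sub_norm_le (t : UnitAddCircle) s).trans ?_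
    rw [← AddCircle.coe_sub, abs_sub_comm]
    exact QuotientAddGroup.norm_mk_le_norm
  calc _ ≤ |(1/4 - ‖(s : UnitAddCircle)‖) / a - (1/4 - ‖(t : UnitAddCircle)‖) / a| :=
        abs_unitClamp_sub_le _ _
    _ = a⁻¹ * |‖(t : UnitAddCircle)‖ - ‖(s : UnitAddCircle)‖| := by
        rw [← sub_div, sub_sub_sub_cancel_left, abs_div, abs_of_pos ha, div_eq_inv_mul]
    _ ≤ a⁻¹ * |s - t| := by gcongr

lemma lipschitzWith_trapezoidWave_comp_mul (ha : 0 < a) (c : ℝ) :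
    LipschitzWith (|c| * a⁻¹).toNNReal (fun x => trapezoidWave a (c * x)) :=
  LipschitzWith.of_dist_le' fun x y => by
    simp only [Real.dist_eq]
    refine (abs_trapezoidWave_sub_le ha _ _).trans ?_
    rw [← mul_sub, abs_mul]
    linarith

lemma continuous_trapezoidWave (ha : 0 < a) : Continuous (trapezoidWave a) := by
  simpa using (lipschitzWith_trapezoidWave_comp_mul ha 1).continuous

lemma trapezoidWave_add_half {t : ℝ} (ht : t ∈ Icc (0:ℝ) (1/2)) :
    trapezoidWave a (t + 1/2) = -trapezoidWave a t := by
  rw [trapezoidWave, trapezoidWave, ← unitClamp_neg,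
    norm_coe_unitAddCircle_of_mem_Icc ⟨by linarith [ht.1], by linarith [ht.2]⟩,
    norm_coe_unitAddCircle_of_mem_Icc ⟨ht.1, by linarith [ht.2]⟩,
    min_eq_right (a := t + 1/2) (by linarith [ht.1]), min_eq_left (a := t) (by linarith [ht.2])]
  congr 1
  ring

lemma intervalIntegral_trapezoidWave (ha : 0 < a) : ∫ t in (0:ℝ)..1, trapezoidWave a t = 0 := by
  have hint := fun p q => (continuous_trapezoidWave ha).intervalIntegrable (μ := volume) p q
  have hsecond : ∫ t in (1/2:ℝ)..1, trapezoidWave a t = -∫ t in (0:ℝ)..1/2, trapezoidWave a t := by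
    have hshift :=
      intervalIntegral.integral_comp_add_right (trapezoidWave a) (1/2:ℝ) (a := 0) (b := 1/2)
    rw [zero_add, show (1/2 + 1/2 : ℝ) = 1 by norm_num] at hshift
    rw [← hshift, ← intervalIntegral.integral_neg]
    refine intervalIntegral.integral_congr fun t ht => ?_
    rw [uIcc_of_le (by norm_num)] at ht
    exact trapezoidWave_add_half ht
  rw [← intervalIntegral.integral_add_adjacent_intervals (hint 0 (1/2)) (hint (1/2) 1), hsecond,
    add_neg_cancel]

lemma measureReal_abs_trapezoidWave_lt_one_le (ha : 0 < a) :
    volume.real (Ioo (0:ℝ) 1 ∩ {t | |trapezoidWave a t| < 1}) ≤ 4 * a := by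
  have hsub : Ioo (0:ℝ) 1 ∩ {t | |trapezoidWave a t| < 1} ⊆
      Ioo (1/4 - a) (1/4 + a) ∪ Ioo (3/4 - a) (3/4 + a) := by
    rintro t ⟨ht, hlt⟩
    have h := abs_lt_one_of_abs_unitClamp_lt_one hlt
    rw [norm_coe_unitAddCircle_of_mem_Icc (Ioo_subset_Icc_self ht), abs_div, abs_of_pos ha,
      div_lt_one ha, abs_lt] at h
    rcases min_choice t (1 - t) with hm | hm <;> rw [hm] at h
    · exact Or.inl ⟨by linarith, by linarith⟩
    · exact Or.inr ⟨by linarith, by linarith⟩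
  calc _ ≤ volume.real (Ioo (1/4 - a) (1/4 + a) ∪ Ioo (3/4 - a) (3/4 + a)) :=
        measureReal_mono hsub (measure_union_lt_top measure_Ioo_lt_top measure_Ioo_lt_top).ne
    _ ≤ volume.real (Ioo (1/4 - a) (1/4 + a)) + volume.real (Ioo (3/4 - a) (3/4 + a)) :=
        measureReal_union_le _ _
    _ = 4 * a := by
        rw [Real.volume_real_Ioo_of_le (by linarith), Real.volume_real_Ioo_of_le (by linarith)]
        ring

lemma measureReal_abs_trapezoidWave_comp_lt_one_le (ha : 0 < a) {N : ℕ} (hN : N ≠ 0) :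
    volume.real (Ioo (0:ℝ) 1 ∩ {x | |trapezoidWave a (N * x)| < 1}) ≤ 4 * a :=
  (measureReal_Ioo_inter_preimage_natCast_mul (S := {t | |trapezoidWave a t| < 1})
    (isOpen_lt (continuous_abs.comp (continuous_trapezoidWave ha)) continuous_const).measurableSet
    (fun x => by simp [trapezoidWave_periodic a x]) hN).trans_le
    (measureReal_abs_trapezoidWave_lt_one_le ha)

lemma abs_intervalIntegral_trapezoidWave_comp_le (ha : 0 < a) {N : ℕ} (hN : N ≠ 0) (y : ℝ) :
    |∫ t in (0:ℝ)..y, trapezoidWave a (N * t)| ≤ (N:ℝ)⁻¹ := by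
  rw [intervalIntegral.integral_comp_mul_left _ (Nat.cast_ne_zero.2 hN), mul_zero, smul_eq_mul,
    abs_mul, abs_inv, Nat.abs_cast]
  exact mul_le_of_le_one_right (by positivity)
    ((trapezoidWave_periodic a).abs_intervalIntegral_le
      (fun p q => (continuous_trapezoidWave ha).intervalIntegrable p q)
      (intervalIntegral_trapezoidWave ha) (abs_trapezoidWave_le a) _)

lemma intervalIntegral_trapezoidWave_comp_natCast_mul (ha : 0 < a) {N : ℕ} (hN : N ≠ 0) :
    ∫ x in (0:ℝ)..1, trapezoidWave a (N * x) = 0 := by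
  rw [(trapezoidWave_periodic a).intervalIntegral_comp_natCast_mul
    (fun p q => (continuous_trapezoidWave ha).intervalIntegrable p q) hN,
    intervalIntegral_trapezoidWave ha]

theorem energyF_trapezoidWave_le {W : ℝ → ℝ} {M b σ κ Λ : ℝ} {N : ℕ}
    (hW : ContinuousOn W (Icc (-1:ℝ) 1)) (hWM : ∀ y ∈ Icc (-1:ℝ) 1, W y ≤ M)
    (hWneg : W (-1) = 0) (hWpos : W 1 = 0) (hb : 0 ≤ b) (hσ : 0 ≤ σ) (hκ : 0 < κ)
    (ha : 0 < a) (hN : N ≠ 0) :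
    energyF W b σ κ Λ (fun x => trapezoidWave a (N * x)) (deriv fun x => trapezoidWave a (N * x))
        (periodicPrimitive fun x => -(Λ / κ) * trapezoidWave a (N * x))
        (fun x => -(Λ / κ) * trapezoidWave a (N * x)) ≤
      M * (4 * a) + b / 2 * ((N * a⁻¹) ^ 2 * (4 * a)) + σ / 2 * (2 * (|Λ / κ| * (N:ℝ)⁻¹)) ^ 2
        - Λ ^ 2 / (2 * κ) * (1 - 4 * a) := by
  set u : ℝ → ℝ := fun x => trapezoidWave a (N * x)
  set h' := periodicPrimitive fun x => -(Λ / κ) * u x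
  have hlip : LipschitzWith (|(N:ℝ)| * a⁻¹).toNNReal u := lipschitzWith_trapezoidWave_comp_mul ha N
  have hL : ((|(N:ℝ)| * a⁻¹).toNNReal : ℝ) = N * a⁻¹ := by
    rw [Nat.abs_cast, Real.coe_toNNReal _ (by positivity)]
  have hu : Continuous u := hlip.continuous
  have hmem : ∀ x, u x ∈ Icc (-1:ℝ) 1 := fun x => abs_le.1 (abs_trapezoidWave_le a _)
  have hδ := measureReal_abs_trapezoidWave_comp_lt_one_le ha hN
  have hh' : Continuous h' := (continuous_const.mul hu).periodicPrimitive
  have hh'_le : ∀ x, |h' x| ≤ 2 * (|Λ / κ| * (N:ℝ)⁻¹) := abs_periodicPrimitive_le fun y => by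
    rw [intervalIntegral.integral_const_mul, abs_mul, abs_neg]
    exact mul_le_mul_of_nonneg_left (abs_intervalIntegral_trapezoidWave_comp_le ha hN y)
      (abs_nonneg _)
  have hW_bound := setIntegral_comp_le_mul hu hmem hδ hW hWM hWneg hWpos
  have hu'_bound := setIntegral_deriv_sq_le hlip hmem hδ
  rw [hL] at hu'_bound
  have hh'_bound := setIntegral_Ioo_sq_le hh'_le
  have hu_bound := one_sub_le_setIntegral_sq hu hmem hδ
  have hIoo : ∀ {f : ℝ → ℝ}, Continuous f → IntegrableOn f (Ioo (0:ℝ) 1) := fun hf =>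
    hf.integrableOn_Icc.mono_set Ioo_subset_Icc_self
  rw [energyF_neg_div_mul_eq (u := u) hκ.ne' (hIoo (hW.comp_continuous hu hmem))
    (hlip.integrableOn_deriv_sq measure_Ioo_lt_top.ne) (hIoo (hh'.pow 2)) (hIoo (hu.pow 2))]
  gcongr

end TrapezoidWave

lemma exists_natCast_sq_mem_Icc {x : ℝ} (hx : 0 < x) :
    ∃ N : ℕ, N ≠ 0 ∧ x ≤ (N:ℝ) ^ 2 ∧ (N:ℝ) ^ 2 ≤ 2 * x + 2 := by
  have hs := Real.sqrt_pos.2 hx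
  have hsq := Real.sq_sqrt hx.le
  refine ⟨⌈√x⌉₊, (Nat.ceil_pos.2 hs).ne', ?_, ?_⟩
  · calc x = √x ^ 2 := hsq.symm
      _ ≤ (⌈√x⌉₊ : ℝ) ^ 2 := pow_le_pow_left₀ hs.le (Nat.le_ceil _) 2
  · have hup := Nat.ceil_lt_add_one hs.le
    nlinarith [sq_nonneg (√x - 1), Nat.le_ceil √x]

lemma le_of_mul_maxParam_le {C b σ κ Λ : ℝ} (hC : 0 ≤ C) (hb : 0 ≤ b) (hσ : 0 ≤ σ) (hκ : 0 ≤ κ)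
    (h : C * maxParam b σ κ ≤ Λ ^ 2) :
    C * (b * σ) ≤ Λ ^ 2 ∧ C * (b * κ) ≤ Λ ^ 2 ∧
      C ^ 2 * (b * σ * κ) ≤ Λ ^ 4 ∧ C ^ 2 * (b * κ ^ 2) ≤ Λ ^ 4 := by
  have hle : ∀ {y}, y ≤ maxParam b σ κ → C * y ≤ Λ ^ 2 := fun hy =>
    (mul_le_mul_of_nonneg_left hy hC).trans h
  have hsq : ∀ {y}, 0 ≤ y → √y ≤ maxParam b σ κ → C ^ 2 * y ≤ Λ ^ 4 := fun hy hy' => by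
    have := pow_le_pow_left₀ (by positivity) (hle hy') 2
    rwa [mul_pow, Real.sq_sqrt hy, ← pow_mul] at this
  refine ⟨hle ?_, hle ?_, hsq (by positivity) ?_, hsq (by positivity) ?_⟩
  · exact (le_max_left _ _).trans (le_max_left _ _)
  · exact (le_max_right _ _).trans (le_max_left _ _)
  · exact (le_max_left _ _).trans (le_max_right _ _)
  · rw [Real.sqrt_mul hb, Real.sqrt_sq hκ]
    exact (le_max_right _ _).trans (le_max_right _ _)

lemma exists_wave_parameters {M b σ κ Λ : ℝ} (hM : 0 ≤ M) (hb : 0 < b) (hσ : 0 < σ)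
    (hκ : 0 < κ) (hΛ : 0 < Λ) (hC : 10 ^ 5 * (M + 1) * maxParam b σ κ ≤ Λ ^ 2) :
    ∃ N : ℕ, N ≠ 0 ∧ 40 * σ ≤ N ^ 2 * κ ∧ ∃ a : ℝ, 0 < a ∧ a ≤ 1 / 20 ∧
      40 * a * M ≤ Λ ^ 2 / κ ∧ 20 * b * N ^ 2 ≤ a * (Λ ^ 2 / κ) := by
  obtain ⟨hbσ, hbκ, hbσκ, hbκκ⟩ := le_of_mul_maxParam_le (by positivity) hb.le hσ.le hκ.le hC
  obtain ⟨N, hN, hNlow, hNup⟩ := exists_natCast_sq_mem_Icc (x := 40 * σ / κ) (by positivity)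
  have hlow : 40 * σ ≤ N ^ 2 * κ := by rwa [div_le_iff₀ hκ] at hNlow
  have hup : b * (N ^ 2 * κ) ≤ b * (80 * σ + 2 * κ) := by
    refine mul_le_mul_of_nonneg_left ?_ hb.le
    have := mul_le_mul_of_nonneg_right hNup hκ.le
    rw [add_mul, mul_assoc, div_mul_cancel₀ _ hκ.ne'] at this
    linarith
  have hC₁ : (10:ℝ) ^ 5 ≤ 10 ^ 5 * (M + 1) := by linarith
  have hC₂ : (10:ℝ) ^ 5 * M ≤ (10 ^ 5 * (M + 1)) ^ 2 := by nlinarith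
  have h₁ := mul_le_mul_of_nonneg_right hC₁ (by positivity : 0 ≤ b * σ)
  have h₂ := mul_le_mul_of_nonneg_right hC₁ (by positivity : 0 ≤ b * κ)
  have h₃ := mul_le_mul_of_nonneg_right hC₂ (by positivity : 0 ≤ b * σ * κ)
  have h₄ := mul_le_mul_of_nonneg_right hC₂ (by positivity : 0 ≤ b * κ ^ 2)
  have hκup := mul_le_mul_of_nonneg_left hup (by positivity : 0 ≤ M * κ)
  refine ⟨N, hN, hlow, 20 * b * N ^ 2 * κ / Λ ^ 2, by positivity, ?_, ?_, ?_⟩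
  · rw [div_le_iff₀ (by positivity)]
    linarith [sq_nonneg Λ]
  · rw [le_div_iff₀ hκ, show 40 * (20 * b * N ^ 2 * κ / Λ ^ 2) * M * κ
      = 800 * (M * κ * (b * (N ^ 2 * κ))) / Λ ^ 2 by ring, div_le_iff₀ (by positivity)]
    linarith [pow_nonneg hΛ.le 4]
  · field_simp
    rfl

lemma wave_energy_bound_le {M b σ κ Λ a : ℝ} {N : ℕ} (hκ : 0 < κ) (hN : N ≠ 0)
    (hσN : 40 * σ ≤ N ^ 2 * κ) (ha : 0 < a) (ha20 : a ≤ 1 / 20)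
    (haM : 40 * a * M ≤ Λ ^ 2 / κ) (hab : 20 * b * N ^ 2 ≤ a * (Λ ^ 2 / κ)) :
    M * (4 * a) + b / 2 * ((N * a⁻¹) ^ 2 * (4 * a)) + σ / 2 * (2 * (|Λ / κ| * (N:ℝ)⁻¹)) ^ 2
      - Λ ^ 2 / (2 * κ) * (1 - 4 * a) ≤ -(1 / 20 * (Λ ^ 2 / κ)) := by
  set E := Λ ^ 2 / κ with hE
  have hE₀ : 0 ≤ E := by positivity
  have hNpos : (0:ℝ) < N := Nat.cast_pos.2 (Nat.pos_of_ne_zero hN)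
  have hgrad : b / 2 * ((N * a⁻¹) ^ 2 * (4 * a)) ≤ E / 10 := by
    rw [show b / 2 * ((N * a⁻¹) ^ 2 * (4 * a)) = 2 * b * N ^ 2 / a by field_simp; ring,
      div_le_iff₀ ha]
    linarith
  have hslope : σ / 2 * (2 * (|Λ / κ| * (N:ℝ)⁻¹)) ^ 2 ≤ E / 20 := by
    rw [show σ / 2 * (2 * (|Λ / κ| * (N:ℝ)⁻¹)) ^ 2 = 2 * σ * E / (κ * N ^ 2) by
      rw [mul_pow, mul_pow, sq_abs, hE]; field_simp, div_le_iff₀ (by positivity)]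
    nlinarith
  rw [show Λ ^ 2 / (2 * κ) = E / 2 by rw [hE]; ring]
  nlinarith [mul_le_mul_of_nonneg_right ha20 hE₀]

theorem upper_bound_negative_scaling_general (W : ℝ → ℝ)
    (hW_cont : ContinuousOn W (Icc (-1:ℝ) 1))
    (hW_zero : ∀ x ∈ Icc (-1:ℝ) 1, (W x = 0 ↔ x = -1 ∨ x = 1)) :
    ∃ C : ℝ, 0 < C ∧
      ∀ b σ κ Λ : ℝ, 0 < b → 0 < σ → 0 < κ → 0 < Λ →
        C * maxParam b σ κ ≤ Λ ^ 2 →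
        ∃ u u' h h' h'' : ℝ → ℝ, IsAdmissible u u' h h' h'' ∧
          energyF W b σ κ Λ u u' h' h'' ≤ -(1 / 20 * (Λ ^ 2 / κ)) := by
  have hWneg : W (-1) = 0 := (hW_zero (-1) (by norm_num)).2 (Or.inl rfl)
  have hWpos : W 1 = 0 := (hW_zero 1 (by norm_num)).2 (Or.inr rfl)
  obtain ⟨x₀, -, hx₀⟩ := isCompact_Icc.exists_isMaxOn (nonempty_Icc.2 (by norm_num)) hW_cont
  have hM : 0 ≤ W x₀ := hWpos ▸ hx₀ (by norm_num : (1:ℝ) ∈ Icc (-1) 1)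
  refine ⟨10 ^ 5 * (W x₀ + 1), by positivity, fun b σ κ Λ hb hσ hκ hΛ hC => ?_⟩
  obtain ⟨N, hN, hσN, a, ha, ha20, haM, hab⟩ := exists_wave_parameters hM hb hσ hκ hΛ hC
  refine ⟨_, _, _, _, _,
    isAdmissible_of_lipschitzWith (lipschitzWith_trapezoidWave_comp_mul ha N)
      ((trapezoidWave_periodic a).comp_natCast_mul N)
      (fun x => abs_le.1 (abs_trapezoidWave_le a _))
      (intervalIntegral_trapezoidWave_comp_natCast_mul ha hN) (-(Λ / κ)), ?_⟩
  exact (energyF_trapezoidWave_le hW_cont (fun y hy => hx₀ hy) hWneg hWpos hb.le hσ.le hκ ha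
    hN).trans (wave_energy_bound_le hκ hN hσN ha ha20 haM hab)

/-- if `W` satisfies (H1), then there is `C > 0` (depending only on `W`)
such that for all `b,σ,κ,Λ > 0` with `Λ² ≥ C·max{σb, bκ, (bσκ)^{1/2}, b^{1/2}κ}` there
is an admissible pair `(u,h) ∈ A` with `F(u,h) ≤ −(1/20)·Λ²/κ`. -/
theorem upper_bound_negative_scaling (W : ℝ → ℝ)
    (hW_cont : ContinuousOn W (Icc (-1:ℝ) 1))
    (hW_nonneg : ∀ x ∈ Icc (-1:ℝ) 1, 0 ≤ W x)
    (hW_zero : ∀ x ∈ Icc (-1:ℝ) 1, (W x = 0 ↔ x = -1 ∨ x = 1)) :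
    ∃ C : ℝ, 0 < C ∧
      ∀ b σ κ Λ : ℝ, 0 < b → 0 < σ → 0 < κ → 0 < Λ →
        C * maxParam b σ κ ≤ Λ ^ 2 →
        ∃ u u' h h' h'' : ℝ → ℝ, IsAdmissible u u' h h' h'' ∧
          energyF W b σ κ Λ u u' h' h'' ≤ -(1 / 20 * (Λ ^ 2 / κ)) :=
  upper_bound_negative_scaling_general W hW_cont hW_zero
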